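/- For all n ≥ 0, the average of L over the nonsimple binary butterfly group B_{2^n} satisfies (3/2)^n ≤ (1/2^{2^n − 1}) · Σ_{σ ∈ B_{2^n}} L(σ) ≤ ((6 + √2)/4)^n. In particular, with N = 2^n, the expected longest increasing subsequence of a uniform nonsimple binary butterfly permutation lies between N^{log₂(3/2)} and N^{log₂(6+√2) − 2}. -/

import Mathlib

/-- Kronecker product of permutations: `(i, r) ↦ (σ i, π r)` under the
row-major identification `Fin (a * b) ≃ Fin a × Fin b`. -/
def permKron {a b : ℕ} (σ : Equiv.Perm (Fin a)) (π : Equiv.Perm (Fin b)) :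
    Equiv.Perm (Fin (a * b)) :=
  finProdFinEquiv.symm.trans ((Equiv.prodCongr σ π).trans finProdFinEquiv)

/-- Direct (block) sum of permutations: `(i, r) ↦ (i, π i r)`. -/
def permBlockSum {a b : ℕ} (π : Fin a → Equiv.Perm (Fin b)) :
    Equiv.Perm (Fin (a * b)) :=
  finProdFinEquiv.symm.trans ((Equiv.prodCongrRight π).trans finProdFinEquiv)

/-- The simple `m`-nary butterfly permutations of `Fin (m ^ n)`:
Kronecker products `τ^{a₁} ⊗ ⋯ ⊗ τ^{aₙ}` of powers of the standard `m`-cycle `τ = finRotate m`. -/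
def simpleButterfly (m : ℕ) : (n : ℕ) → Set (Equiv.Perm (Fin (m ^ n)))
  | 0 => {1}
  | n + 1 =>
    {σ | ∃ (a : ℤ) (π : Equiv.Perm (Fin (m ^ n))), π ∈ simpleButterfly m n ∧
      σ = (finCongr (pow_succ' m n).symm).permCongr (permKron (finRotate m ^ a) π)}

/-- The nonsimple `m`-nary butterfly permutations of `Fin (m ^ n)`:
`B₀ = {1}`, `B_{n+1} = {(τ^a ⊗ id) ∘ (σ₁ ⊕ ⋯ ⊕ σ_m) : σᵢ ∈ B_n}`. -/
def nonsimpleButterfly (m : ℕ) : (n : ℕ) → Set (Equiv.Perm (Fin (m ^ n)))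
  | 0 => {1}
  | n + 1 =>
    {σ | ∃ (a : ℤ) (π : Fin m → Equiv.Perm (Fin (m ^ n))),
      (∀ i, π i ∈ nonsimpleButterfly m n) ∧
      σ = (finCongr (pow_succ' m n).symm).permCongr
        (permKron (finRotate m ^ a) 1 * permBlockSum π)}

/-- The length of the longest increasing subsequence of a permutation. -/
noncomputable def LIS {M : ℕ} (σ : Equiv.Perm (Fin M)) : ℕ :=
  sSup {k | ∃ t : Finset (Fin M), t.card = k ∧ StrictMonoOn (⇑σ) ↑t}

/-- The length of the longest decreasing subsequence of a permutation. -/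
noncomputable def LDS {M : ℕ} (σ : Equiv.Perm (Fin M)) : ℕ :=
  sSup {k | ∃ t : Finset (Fin M), t.card = k ∧ StrictAntiOn (⇑σ) ↑t}

/-- The number of cycles in the disjoint cycle decomposition of `σ`,
counting fixed points as cycles of length 1. -/
def numCycles {M : ℕ} (σ : Equiv.Perm (Fin M)) : ℕ :=
  Multiset.card σ.cycleType + (Finset.univ.filter fun x => σ x = x).card

/-- The number of fixed points of `σ`. -/
def numFixed {M : ℕ} (σ : Equiv.Perm (Fin M)) : ℕ :=
  (Finset.univ.filter fun x => σ x = x).card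

/-!
For `m = 2` the recursion has two shapes: for even `a`, `σ = σ₁ ⊕ σ₂` is a direct sum and
`L σ = L σ₁ + L σ₂`; for odd `a` the two blocks are swapped, `σ` is a skew sum and
`L σ = max (L σ₁) (L σ₂)`. Since `B_{2^(n+1)}` is in bijection with `Bool × B_{2^n} × B_{2^n}`,
the LIS `X` of a uniform element of `B_{2^(n+1)}` is, with probability `1/2` each, `Y + Y'` or
`max Y Y'` for independent copies `Y, Y'` of the LIS on `B_{2^n}`. From
`max Y Y' = (Y + Y' + |Y - Y'|) / 2` we get `E X = 3/2 E Y + E|Y - Y'| / 4`, hence the lower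
bound. For the upper bound, Cauchy–Schwarz gives `E|Y - Y'| ≤ √(2 Var Y) ≤ √2 E Y` as long as
`E Y² ≤ 2 (E Y)²`; this invariant survives each step by the same identities together with
`(E min Y Y')² ≤ E (min Y Y')²`.
-/

open Equiv Finset
open scoped BigOperators

section LIS
variable {M : ℕ}

lemma bddAbove_LIS (σ : Perm (Fin M)) :
    BddAbove {k | ∃ t : Finset (Fin M), #t = k ∧ StrictMonoOn σ t} :=
  ⟨M, by rintro k ⟨t, rfl, -⟩; simpa using t.card_le_univ⟩

lemma card_le_LIS {σ : Perm (Fin M)} {t : Finset (Fin M)} (ht : StrictMonoOn σ t) :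
    #t ≤ LIS σ :=
  le_csSup (bddAbove_LIS σ) ⟨t, rfl, ht⟩

lemma exists_card_eq_LIS (σ : Perm (Fin M)) :
    ∃ t : Finset (Fin M), #t = LIS σ ∧ StrictMonoOn σ t :=
  Nat.sSup_mem (by exact ⟨0, ∅, rfl, by simp [StrictMonoOn]⟩) (bddAbove_LIS σ)

lemma LIS_le {σ : Perm (Fin M)} {m : ℕ} (h : ∀ t : Finset (Fin M), StrictMonoOn σ t → #t ≤ m) :
    LIS σ ≤ m := by
  obtain ⟨t, ht, hmono⟩ := exists_card_eq_LIS σ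
  exact ht ▸ h t hmono

lemma LIS_one : LIS (1 : Perm (Fin M)) = M :=
  le_antisymm (LIS_le fun t _ => by simpa using t.card_le_univ)
    (by simpa using card_le_LIS (σ := 1) (t := univ) fun _ _ _ _ h => h)

lemma LIS_permCongr_finCongr {M' : ℕ} (h : M = M') (σ : Perm (Fin M)) :
    LIS ((finCongr h).permCongr σ) = LIS σ := by
  subst h
  rfl

end LIS

section Blocks
variable {a b : ℕ}

lemma finProdFinEquiv_lt_finProdFinEquiv_iff {i j : Fin a} {r s : Fin b} :
    finProdFinEquiv (i, r) < finProdFinEquiv (j, s) ↔ i < j ∨ i = j ∧ r < s := by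
  simp only [Fin.lt_def, Fin.ext_iff, finProdFinEquiv_apply_val]
  have hr := r.isLt
  have hs := s.isLt
  rcases lt_trichotomy (i : ℕ) j with h | h | h
  · have : b * (i + 1) ≤ b * j := Nat.mul_le_mul_left b h
    exact iff_of_true (by nlinarith) (Or.inl h)
  · simp [h]
  · have : b * (j + 1) ≤ b * i := Nat.mul_le_mul_left b h
    exact iff_of_false (by nlinarith) (by omega)

lemma finProdFinEquiv_divNat_modNat (x : Fin (a * b)) :
    finProdFinEquiv (x.divNat, x.modNat) = x :=
  Fin.ext (Nat.mod_add_div x b)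

lemma permKron_one_one : permKron (1 : Perm (Fin a)) (1 : Perm (Fin b)) = 1 := by
  ext x
  simp [permKron, Nat.mod_add_div]

lemma permKron_mul_permBlockSum_apply (g : Perm (Fin a)) (π : Fin a → Perm (Fin b)) (i : Fin a)
    (r : Fin b) :
    (permKron g (1 : Perm (Fin b)) * permBlockSum π) (finProdFinEquiv (i, r)) =
      finProdFinEquiv (g i, π i r) := by
  simp [permKron, permBlockSum]

variable (g : Perm (Fin a)) (π : Fin a → Perm (Fin b))

lemma LIS_le_LIS_permKron_mul_permBlockSum (i : Fin a) :
    LIS (π i) ≤ LIS (permKron g (1 : Perm (Fin b)) * permBlockSum π) := by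
  obtain ⟨u, hu, hmono⟩ := exists_card_eq_LIS (π i)
  have hinj : Function.Injective fun r : Fin b => finProdFinEquiv (i, r) :=
    finProdFinEquiv.injective.comp (Prod.mk_right_injective i)
  rw [← hu, ← card_image_of_injective u hinj]
  refine card_le_LIS ?_
  simp only [coe_image]
  rintro _ ⟨r, hr, rfl⟩ _ ⟨s, hs, rfl⟩ hrs
  simp only [permKron_mul_permBlockSum_apply, finProdFinEquiv_lt_finProdFinEquiv_iff, lt_irrefl,
    true_and, false_or] at hrs ⊢
  exact hmono hr hs hrs

lemma card_filter_divNat_le_LIS {t : Finset (Fin (a * b))}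
    (ht : StrictMonoOn (permKron g (1 : Perm (Fin b)) * permBlockSum π) t) (i : Fin a) :
    #(t.filter (·.divNat = i)) ≤ LIS (π i) := by
  have hblock : ∀ x ∈ t.filter (·.divNat = i), finProdFinEquiv (i, x.modNat) = x := by
    intro x hx
    rw [← (mem_filter.1 hx).2, finProdFinEquiv_divNat_modNat]
  rw [← card_image_of_injOn (f := Fin.modNat) fun x hx y hy hxy => by
    rw [← hblock x hx, ← hblock y hy, hxy]]
  refine card_le_LIS ?_
  simp only [coe_image]
  rintro _ ⟨x, hx, rfl⟩ _ ⟨y, hy, rfl⟩ hxy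
  have hσ := ht (mem_filter.1 hx).1 (mem_filter.1 hy).1 (by
    rw [← hblock x hx, ← hblock y hy, finProdFinEquiv_lt_finProdFinEquiv_iff]
    exact Or.inr ⟨rfl, hxy⟩)
  rw [← hblock x hx, ← hblock y hy] at hσ
  simpa only [permKron_mul_permBlockSum_apply, finProdFinEquiv_lt_finProdFinEquiv_iff, lt_irrefl,
    true_and, false_or] using hσ

theorem LIS_permBlockSum : LIS (permBlockSum π) = ∑ i, LIS (π i) := by
  have hσ : permBlockSum π = permKron 1 (1 : Perm (Fin b)) * permBlockSum π := by
    rw [permKron_one_one, one_mul]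
  apply le_antisymm
  · refine LIS_le fun t ht => ?_
    rw [hσ] at ht
    rw [card_eq_sum_card_fiberwise fun x _ => mem_univ (Fin.divNat x)]
    exact sum_le_sum fun i _ => card_filter_divNat_le_LIS 1 π ht i
  · choose u hu hmono using fun i => exists_card_eq_LIS (π i)
    let e : (Σ _ : Fin a, Fin b) ↪ Fin (a * b) :=
      ((Equiv.sigmaEquivProd _ _).trans finProdFinEquiv).toEmbedding
    have hcard : #((univ.sigma u).map e) = ∑ i, LIS (π i) := by simp [hu]
    rw [← hcard, hσ]
    refine card_le_LIS ?_
    simp only [coe_map]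
    rintro _ ⟨⟨i, r⟩, hr, rfl⟩ _ ⟨⟨j, s⟩, hs, rfl⟩ hrs
    simp only [e, Equiv.coe_toEmbedding, Equiv.trans_apply, Equiv.sigmaEquivProd_apply,
      permKron_mul_permBlockSum_apply, finProdFinEquiv_lt_finProdFinEquiv_iff, Perm.one_apply]
      at hrs ⊢
    rcases hrs with hij | ⟨rfl, hrs⟩
    · exact Or.inl hij
    · exact Or.inr ⟨rfl, hmono i (mem_sigma.1 hr).2 (mem_sigma.1 hs).2 hrs⟩

theorem LIS_permKron_revPerm_mul_permBlockSum :
    LIS (permKron Fin.revPerm (1 : Perm (Fin b)) * permBlockSum π) =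
      univ.sup fun i => LIS (π i) := by
  apply le_antisymm
  · refine LIS_le fun t ht => ?_
    obtain rfl | ⟨x, hx⟩ := t.eq_empty_or_nonempty
    · simp
    have hsame : ∀ y ∈ t, ∀ z ∈ t, y < z → y.divNat = z.divNat := by
      intro y hy z hz hyz
      have hσ := ht hy hz hyz
      rw [← finProdFinEquiv_divNat_modNat y, ← finProdFinEquiv_divNat_modNat z] at hyz hσ
      rw [finProdFinEquiv_lt_finProdFinEquiv_iff] at hyz
      rw [permKron_mul_permBlockSum_apply, permKron_mul_permBlockSum_apply,
        finProdFinEquiv_lt_finProdFinEquiv_iff, Fin.revPerm_apply, Fin.revPerm_apply,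
        Fin.rev_lt_rev, Fin.rev_inj] at hσ
      rcases hyz with h | h
      · rcases hσ with h' | h'
        · exact absurd h (lt_asymm h')
        · exact (h.ne h'.1).elim
      · exact h.1
    have hblock : t.filter (·.divNat = x.divNat) = t := filter_true_of_mem fun y hy => by
      rcases lt_trichotomy y x with h | rfl | h
      · exact hsame y hy x hx h
      · rfl
      · exact (hsame x hx y hy h).symm
    calc #t = #(t.filter (·.divNat = x.divNat)) := by rw [hblock]
      _ ≤ LIS (π x.divNat) := card_filter_divNat_le_LIS _ π ht _
      _ ≤ univ.sup fun i => LIS (π i) := le_sup (f := fun i => LIS (π i)) (mem_univ _)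
  · exact Finset.sup_le fun i _ => LIS_le_LIS_permKron_mul_permBlockSum _ π i

end Blocks

def sumOrMax {ι α : Type*} [Add α] [Max α] (x : ι → α) : Bool × ι × ι → α
  | (b, p, q) => if b then max (x p) (x q) else x p + x q

section Moments
variable {ι κ : Type*} [Fintype ι] [Fintype κ]

lemma expect_bool_prod (f : Bool × κ → ℝ) :
    𝔼 z, f z = (𝔼 k, f (false, k) + 𝔼 k, f (true, k)) / 2 := by
  simp only [Fintype.expect_eq_sum_div_card, Fintype.sum_prod_type, Fintype.sum_bool,
    Fintype.card_prod, Fintype.card_bool]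
  push_cast
  ring

lemma expect_comp_sumOrMax (x : ι → ℝ) (g : ℝ → ℝ) :
    𝔼 z, g (sumOrMax x z) =
      (𝔼 p, 𝔼 q, g (x p + x q) + 𝔼 p, 𝔼 q, g (max (x p) (x q))) / 2 := by
  rw [expect_bool_prod]
  simp only [← univ_product_univ, expect_product]
  rfl

lemma expect_expect_abs_sub_nonneg (x : ι → ℝ) : 0 ≤ 𝔼 p, 𝔼 q, |x p - x q| :=
  expect_nonneg fun _ _ => expect_nonneg fun _ _ => abs_nonneg _

variable [Nonempty ι] [Nonempty κ]

lemma sq_expect_le_expect_sq (f : ι → ℝ) :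
    (𝔼 i, f i) ^ 2 ≤ 𝔼 i, f i ^ 2 := by
  simpa using expect_mul_sq_le_sq_mul_sq univ f 1

lemma sq_expect_expect_le (f : ι → κ → ℝ) :
    (𝔼 p, 𝔼 q, f p q) ^ 2 ≤ 𝔼 p, 𝔼 q, f p q ^ 2 :=
  (sq_expect_le_expect_sq _).trans (expect_le_expect fun _ _ => sq_expect_le_expect_sq _)

variable (x : ι → ℝ)

lemma expect_expect_add : 𝔼 p, 𝔼 q, (x p + x q) = 2 * 𝔼 i, x i := by
  simp only [expect_add_distrib, Fintype.expect_const]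
  ring

lemma expect_expect_add_sq :
    𝔼 p, 𝔼 q, (x p + x q) ^ 2 = 2 * 𝔼 i, x i ^ 2 + 2 * (𝔼 i, x i) ^ 2 := by
  simp only [add_sq, expect_add_distrib, Fintype.expect_const, ← mul_expect, ← expect_mul]
  ring

lemma expect_expect_sub_sq :
    𝔼 p, 𝔼 q, (x p - x q) ^ 2 = 2 * 𝔼 i, x i ^ 2 - 2 * (𝔼 i, x i) ^ 2 := by
  simp only [sub_sq, expect_add_distrib, expect_sub_distrib, Fintype.expect_const, ← mul_expect,
    ← expect_mul]
  ring

lemma expect_expect_max :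
    𝔼 p, 𝔼 q, max (x p) (x q) = 𝔼 i, x i + (𝔼 p, 𝔼 q, |x p - x q|) / 2 := by
  have h : ∀ a b : ℝ, max a b = (a + b + |a - b|) / 2 := fun a b => by
    linarith [max_add_min a b, max_sub_min_eq_abs' a b]
  simp only [h, ← expect_div, expect_add_distrib, Fintype.expect_const]
  ring

lemma expect_expect_min :
    𝔼 p, 𝔼 q, min (x p) (x q) = 𝔼 i, x i - (𝔼 p, 𝔼 q, |x p - x q|) / 2 := by
  have h : ∀ a b : ℝ, min a b = (a + b - |a - b|) / 2 := fun a b => by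
    linarith [max_add_min a b, max_sub_min_eq_abs' a b]
  simp only [h, ← expect_div, expect_add_distrib, expect_sub_distrib, Fintype.expect_const]
  ring

lemma expect_expect_max_sq_add_min_sq :
    𝔼 p, 𝔼 q, max (x p) (x q) ^ 2 + 𝔼 p, 𝔼 q, min (x p) (x q) ^ 2 = 2 * 𝔼 i, x i ^ 2 := by
  have h : ∀ a b : ℝ, max a b ^ 2 + min a b ^ 2 = a ^ 2 + b ^ 2 := fun a b => by
    rcases le_total a b with hab | hab <;> simp [hab]; ring
  simp only [← expect_add_distrib, h, expect_expect_add]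

lemma sq_expect_expect_abs_sub_le :
    (𝔼 p, 𝔼 q, |x p - x q|) ^ 2 ≤ 2 * 𝔼 i, x i ^ 2 - 2 * (𝔼 i, x i) ^ 2 := by
  simpa only [sq_abs, expect_expect_sub_sq] using sq_expect_expect_le fun p q => |x p - x q|

lemma expect_sumOrMax :
    𝔼 z, sumOrMax x z = 3 / 2 * 𝔼 i, x i + (𝔼 p, 𝔼 q, |x p - x q|) / 4 := by
  calc 𝔼 z, sumOrMax x z
      = (𝔼 p, 𝔼 q, (x p + x q) + 𝔼 p, 𝔼 q, max (x p) (x q)) / 2 := expect_comp_sumOrMax x id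
    _ = _ := by rw [expect_expect_add, expect_expect_max]; ring

lemma expect_sumOrMax_sq_le :
    𝔼 z, sumOrMax x z ^ 2 ≤
      2 * 𝔼 i, x i ^ 2 + (𝔼 i, x i) ^ 2 - (𝔼 i, x i - (𝔼 p, 𝔼 q, |x p - x q|) / 2) ^ 2 / 2 := by
  have hmin := sq_expect_expect_le fun p q => min (x p) (x q)
  rw [expect_comp_sumOrMax x (· ^ 2), expect_expect_add_sq]
  rw [expect_expect_min] at hmin
  linarith [expect_expect_max_sq_add_min_sq x]

theorem three_halves_mul_expect_le_expect_sumOrMax :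
    3 / 2 * 𝔼 i, x i ≤ 𝔼 z, sumOrMax x z := by
  rw [expect_sumOrMax]
  linarith [expect_expect_abs_sub_nonneg x]

variable {x}

theorem expect_sumOrMax_le (hμ : 0 ≤ 𝔼 i, x i) (hν : 𝔼 i, x i ^ 2 ≤ 2 * (𝔼 i, x i) ^ 2) :
    𝔼 z, sumOrMax x z ≤ (6 + √2) / 4 * 𝔼 i, x i := by
  have hδ : 𝔼 p, 𝔼 q, |x p - x q| ≤ √2 * 𝔼 i, x i := by
    rw [← pow_le_pow_iff_left₀ (expect_expect_abs_sub_nonneg x) (by positivity) two_ne_zero,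
      mul_pow, Real.sq_sqrt zero_le_two]
    linarith [sq_expect_expect_abs_sub_le x]
  rw [expect_sumOrMax]
  linarith

theorem expect_sumOrMax_sq_le_two_mul_sq (hμ : 0 ≤ 𝔼 i, x i)
    (hν : 𝔼 i, x i ^ 2 ≤ 2 * (𝔼 i, x i) ^ 2) :
    𝔼 z, sumOrMax x z ^ 2 ≤ 2 * (𝔼 z, sumOrMax x z) ^ 2 := by
  refine (expect_sumOrMax_sq_le x).trans ?_
  rw [expect_sumOrMax]
  nlinarith [mul_nonneg hμ (expect_expect_abs_sub_nonneg x)]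

end Moments

lemma finRotate_two_zpow (a : ℤ) : finRotate 2 ^ a = if Odd a then finRotate 2 else 1 := by
  have hsq : finRotate 2 ^ 2 = 1 := by decide
  obtain ⟨k, rfl | rfl⟩ := Int.even_or_odd' a
  · simp [zpow_mul, hsq]
  · simp [zpow_add, zpow_mul, hsq]

def ButterflyCode : ℕ → Type
  | 0 => Unit
  | n + 1 => Bool × ButterflyCode n × ButterflyCode n

namespace ButterflyCode

instance instFintype : ∀ n, Fintype (ButterflyCode n)
  | 0 => inferInstanceAs (Fintype Unit)
  | n + 1 => letI := instFintype n; inferInstanceAs (Fintype (Bool × _ × _))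

instance instNonempty : ∀ n, Nonempty (ButterflyCode n)
  | 0 => inferInstanceAs (Nonempty Unit)
  | n + 1 => letI := instNonempty n; inferInstanceAs (Nonempty (Bool × _ × _))

lemma card_eq (n : ℕ) : Fintype.card (ButterflyCode n) = 2 ^ (2 ^ n - 1) := by
  induction n with
  | zero => rfl
  | succ n ih =>
    change Fintype.card (Bool × ButterflyCode n × ButterflyCode n) = _
    rw [Fintype.card_prod, Fintype.card_prod, Fintype.card_bool, ih, ← pow_add, ← pow_succ']
    congr 1
    have := Nat.one_le_two_pow (n := n)
    rw [pow_succ]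
    omega

def toPerm : ∀ {n}, ButterflyCode n → Perm (Fin (2 ^ n))
  | 0, _ => 1
  | n + 1, (b, p, q) =>
    (finCongr (pow_succ' 2 n).symm).permCongr
      (permKron (if b then finRotate 2 else 1) 1 * permBlockSum ![toPerm p, toPerm q])

def lis : ∀ {n}, ButterflyCode n → ℕ
  | 0, _ => 1
  | _ + 1, z => sumOrMax lis z

theorem LIS_toPerm : ∀ {n} (p : ButterflyCode n), LIS p.toPerm = p.lis
  | 0, _ => LIS_one
  | n + 1, (b, p, q) => by
    rw [toPerm, LIS_permCongr_finCongr]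
    cases b
    · rw [if_neg Bool.false_ne_true, permKron_one_one, one_mul, LIS_permBlockSum, Fin.sum_univ_two]
      simp [LIS_toPerm p, LIS_toPerm q, lis, sumOrMax]
    · rw [if_pos rfl, show finRotate 2 = Fin.revPerm by decide,
        LIS_permKron_revPerm_mul_permBlockSum]
      simp [Fin.univ_succ, LIS_toPerm p, LIS_toPerm q, lis, sumOrMax]

theorem range_toPerm : ∀ n, Set.range (toPerm (n := n)) = nonsimpleButterfly 2 n
  | 0 => by
    ext σ
    simp only [Set.mem_range, nonsimpleButterfly, Set.mem_singleton_iff]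
    exact ⟨fun ⟨_, h⟩ => h.symm, fun h => ⟨(), h.symm⟩⟩
  | n + 1 => by
    ext σ
    simp only [Set.mem_range, nonsimpleButterfly, Set.mem_ofPred_eq, ← range_toPerm n]
    constructor
    · rintro ⟨⟨b, p, q⟩, rfl⟩
      refine ⟨if b then 1 else 0, ![p.toPerm, q.toPerm], fun i => ?_, ?_⟩
      · fin_cases i
        exacts [⟨p, rfl⟩, ⟨q, rfl⟩]
      · cases b <;> simp [toPerm]
    · rintro ⟨a, π, hπ, rfl⟩
      obtain ⟨p, hp⟩ := hπ 0
      obtain ⟨q, hq⟩ := hπ 1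
      refine ⟨(decide (Odd a), p, q), ?_⟩
      have hπ : ![p.toPerm, q.toPerm] = π := by
        ext i : 1
        fin_cases i
        exacts [hp, hq]
      simp [toPerm, finRotate_two_zpow, hπ]

theorem toPerm_injective : ∀ {n}, Function.Injective (toPerm (n := n))
  | 0 => fun _ _ _ => rfl
  | n + 1 => by
    rintro ⟨b, p, q⟩ ⟨b', p', q'⟩ h
    have hpt : ∀ i r, ((if b then finRotate 2 else 1) i, ![p.toPerm, q.toPerm] i r) =
        ((if b' then finRotate 2 else 1) i, ![p'.toPerm, q'.toPerm] i r) := fun i r =>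
      finProdFinEquiv.injective <| by
        rw [← permKron_mul_permBlockSum_apply, ← permKron_mul_permBlockSum_apply,
          (Equiv.permCongr _).injective h]
    have hb : b = b' := by
      have := congrArg Prod.fst (hpt 0 ⟨0, Nat.two_pow_pos n⟩)
      cases b <;> cases b' <;> simp_all
    have hp : p = p' := toPerm_injective (Equiv.ext fun r => congrArg Prod.snd (hpt 0 r))
    have hq : q = q' := toPerm_injective (Equiv.ext fun r => congrArg Prod.snd (hpt 1 r))
    rw [hb, hp, hq]

lemma cast_lis_succ {n : ℕ} (z : ButterflyCode (n + 1)) :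
    (z.lis : ℝ) = sumOrMax (fun p : ButterflyCode n => (p.lis : ℝ)) z := by
  obtain ⟨_ | _, p, q⟩ := z <;> simp [lis, sumOrMax]

theorem expect_lis_bounds (n : ℕ) :
    (3 / 2 : ℝ) ^ n ≤ 𝔼 p : ButterflyCode n, (p.lis : ℝ) ∧
      𝔼 p : ButterflyCode n, (p.lis : ℝ) ≤ ((6 + √2) / 4) ^ n ∧
      𝔼 p : ButterflyCode n, (p.lis : ℝ) ^ 2 ≤ 2 * (𝔼 p : ButterflyCode n, (p.lis : ℝ)) ^ 2 := by
  induction n with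
  | zero => simp [lis]
  | succ n ih =>
    obtain ⟨hlow, hup, hsq⟩ := ih
    have hμ : 0 ≤ 𝔼 p : ButterflyCode n, (p.lis : ℝ) := (by positivity : (0 : ℝ) ≤ _).trans hlow
    simp only [cast_lis_succ]
    refine ⟨?_, ?_, expect_sumOrMax_sq_le_two_mul_sq hμ hsq⟩
    · calc (3 / 2 : ℝ) ^ (n + 1) ≤ 3 / 2 * 𝔼 p : ButterflyCode n, (p.lis : ℝ) := by
            rw [pow_succ']; gcongr
        _ ≤ _ := three_halves_mul_expect_le_expect_sumOrMax _
    · calc _ ≤ (6 + √2) / 4 * 𝔼 p : ButterflyCode n, (p.lis : ℝ) := expect_sumOrMax_le hμ hsq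
        _ ≤ ((6 + √2) / 4) ^ (n + 1) := by rw [pow_succ']; gcongr

theorem finsum_mem_nonsimpleButterfly_two {M : Type*} [AddCommMonoid M] (n : ℕ)
    (f : Perm (Fin (2 ^ n)) → M) :
    ∑ᶠ σ ∈ nonsimpleButterfly 2 n, f σ = ∑ p : ButterflyCode n, f p.toPerm := by
  rw [← range_toPerm, finsum_mem_range toPerm_injective, finsum_eq_sum_of_fintype]

end ButterflyCode

/-- Power-law bounds on the average LIS over the nonsimple binary butterfly group
`B_{2^n}` (of cardinality `2^{2ⁿ−1}`):
`(3/2)ⁿ ≤ E L(σ) ≤ ((6+√2)/4)ⁿ`, i.e. `N^{log₂(3/2)} ≤ E L(σ) ≤ N^{log₂(6+√2)−2}`. -/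
theorem nonsimpleButterfly_expected_LIS_bounds (n : ℕ) :
    ((3 : ℝ) / 2) ^ n ≤
        (1 / (2 : ℝ) ^ (2 ^ n - 1)) * ∑ᶠ σ ∈ nonsimpleButterfly 2 n, (LIS σ : ℝ) ∧
      (1 / (2 : ℝ) ^ (2 ^ n - 1)) * ∑ᶠ σ ∈ nonsimpleButterfly 2 n, (LIS σ : ℝ) ≤
        ((6 + Real.sqrt 2) / 4) ^ n := by
  have hmean : 1 / (2 : ℝ) ^ (2 ^ n - 1) * ∑ᶠ σ ∈ nonsimpleButterfly 2 n, (LIS σ : ℝ) =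
      𝔼 p : ButterflyCode n, (p.lis : ℝ) := by
    rw [ButterflyCode.finsum_mem_nonsimpleButterfly_two, Fintype.expect_eq_sum_div_card,
      ButterflyCode.card_eq]
    simp [ButterflyCode.LIS_toPerm, div_eq_inv_mul]
  obtain ⟨hlow, hup, -⟩ := ButterflyCode.expect_lis_bounds n
  exact hmean ▸ ⟨hlow, hup⟩
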